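/- Let Θ and X be finite nonempty sets and let x : Θ → Δ(X) be injective in the strong sense that for distinct θ, θ' ∈ Θ the lotteries x(θ) and x(θ') have disjoint supports. Fix a quota q ∈ Δ(Θ), an integer K ≥ 1, and a type vector θ = (θ^1,…,θ^K) ∈ Θ^K. Then EVERY feasible report vector r = (r^1,…,r^K) at quota q satisfies (1/K)·Σ_{k=1}^K ‖x(r^k) − x(θ^k)‖ ≥ ‖q − marg θ‖. -/

import Mathlib

open Finset

/-- `p` is a probability vector on the finite set `Z`. -/
def IsProbVec {Z : Type*} [Fintype Z] (p : Z → ℝ) : Prop :=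
  (∀ z, 0 ≤ p z) ∧ ∑ z, p z = 1

/-- Total variation distance `‖p − q‖ = (1/2)·Σ_z |p z − q z|`. -/
noncomputable def tv {Z : Type*} [Fintype Z] (p q : Z → ℝ) : ℝ :=
  (∑ z, |p z - q z|) / 2

/-- Lifted utility: `ū(μ,θ) = Σ_a μ(a)·u(a,θ)` for a lottery `μ ∈ Δ(X)`. -/
noncomputable def ubar {Θ X : Type*} [Fintype X]
    (u : X × Θ → ℝ) (μ : X → ℝ) (θ : Θ) : ℝ :=
  ∑ a, μ a * u (a, θ)

/-- Linear extension of the social choice function `x : Θ → Δ(X)` to `Δ(Θ)`: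
`x(r) = Σ_{θ'} r(θ')·x(θ')`. -/
noncomputable def liftSCF {Θ X : Type*} [Fintype Θ]
    (x : Θ → X → ℝ) (r : Θ → ℝ) : X → ℝ :=
  fun a => ∑ θ', r θ' * x θ' a

/-- `x : Θ → Δ(X)` is cyclically monotone for the utility `u`. -/
def CyclMonoSCF {Θ X : Type*} [Fintype X] (u : X × Θ → ℝ) (x : Θ → X → ℝ) : Prop :=
  ∀ J : ℕ, ∀ θs : Fin (J + 2) → Θ, Function.Injective θs →
    ∑ j, ubar u (x (θs (j + 1))) (θs j) ≤ ∑ j, ubar u (x (θs j)) (θs j)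

/-- `r = (r^1,…,r^K)` is a feasible report vector at quota `q`:
each `r^k ∈ Δ(Θ)` and `(1/K)·Σ_k r^k = q`. -/
def Feasible {Θ : Type*} [Fintype Θ] (K : ℕ) (q : Θ → ℝ)
    (r : Fin K → Θ → ℝ) : Prop :=
  (∀ k, IsProbVec (r k)) ∧ ∀ θ', (∑ k, r k θ') / K = q θ'

/-- Payoff of the report vector `r` at the type vector `θv`:
`(1/K)·Σ_k ū(x(r^k),θ^k)`. -/
noncomputable def payoff {Θ X : Type*} [Fintype Θ] [Fintype X]
    (u : X × Θ → ℝ) (x : Θ → X → ℝ) (K : ℕ)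
    (θv : Fin K → Θ) (r : Fin K → Θ → ℝ) : ℝ :=
  (∑ k, ubar u (liftSCF x (r k)) (θv k)) / K

/-- Empirical distribution of a type vector: `(marg θ)(θ') = |{k : θ^k = θ'}|/K`. -/
noncomputable def marg {Θ : Type*} [Fintype Θ] [DecidableEq Θ] (K : ℕ)
    (θv : Fin K → Θ) : Θ → ℝ :=
  fun θ' => ((Finset.univ.filter (fun k => θv k = θ')).card : ℝ) / K

/-!
Disjointness of supports means that `x(r^k)` puts mass exactly `r^k(θ^k)` on the support of
`x(θ^k)`, so the `k`-th decision error is at least `1 - r^k(θ^k)`. It remains to bound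
`Σ_k r^k(θ^k)`: the agents with `θ^k = t` number `K·(marg θ)(t)` and, by feasibility, report `t`
with total weight at most `K·q(t)`, hence `Σ_k r^k(θ^k) ≤ K·Σ_t min(q(t), (marg θ)(t))`,
which is `K·(1 - ‖q − marg θ‖)`.
-/
section TotalVariation

variable {Z : Type*} [Fintype Z]

theorem IsProbVec.le_one {p : Z → ℝ} (hp : IsProbVec p) (z : Z) : p z ≤ 1 :=
  hp.2 ▸ single_le_sum (fun z _ => hp.1 z) (mem_univ z)

theorem sum_sub_le_tv {p q : Z → ℝ} (h : ∑ z, p z = ∑ z, q z) (S : Finset Z) :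
    ∑ z ∈ S, (q z - p z) ≤ tv p q := by
  classical
  have hS : ∑ z ∈ S, (q z - p z) ≤ ∑ z ∈ S, |p z - q z| :=
    sum_le_sum fun z _ => abs_sub_comm (p z) (q z) ▸ le_abs_self _
  have hSc : ∑ z ∈ Sᶜ, (p z - q z) ≤ ∑ z ∈ Sᶜ, |p z - q z| :=
    sum_le_sum fun z _ => le_abs_self _
  have hbalance : ∑ z ∈ S, (q z - p z) + ∑ z ∈ Sᶜ, (q z - p z) = 0 := by
    rw [sum_add_sum_compl, sum_sub_distrib, h, sub_self]
  have hsplit := sum_add_sum_compl S fun z => |p z - q z|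
  simp only [sum_sub_distrib] at hS hSc hbalance ⊢
  unfold tv
  linarith

theorem tv_eq_one_sub_sum_min {p q : Z → ℝ} (hp : ∑ z, p z = 1) (hq : ∑ z, q z = 1) :
    tv p q = 1 - ∑ z, min (p z) (q z) := by
  have habs : ∀ z, |p z - q z| = p z + q z - 2 * min (p z) (q z) := fun z => by
    linarith [max_sub_min_eq_abs' (p z) (q z), min_add_max (p z) (q z)]
  rw [tv, sum_congr rfl fun z _ => habs z, sum_sub_distrib, sum_add_distrib, ← mul_sum, hp, hq]
  ring

end TotalVariation

section LiftSCF

variable {Θ X : Type*} [Fintype Θ] {x : Θ → X → ℝ}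

theorem liftSCF_apply_of_ne_zero (hdisj : ∀ θ θ', θ ≠ θ' → ∀ a, x θ a = 0 ∨ x θ' a = 0)
    (r : Θ → ℝ) {θ : Θ} {a : X} (ha : x θ a ≠ 0) : liftSCF x r a = r θ * x θ a := by
  refine sum_eq_single θ (fun θ' _ hne => ?_) (by simp)
  rcases hdisj θ θ' hne.symm a with h | h
  · exact absurd h ha
  · rw [h, mul_zero]

variable [Fintype X]

theorem sum_liftSCF (hx : ∀ θ, ∑ a, x θ a = 1) (r : Θ → ℝ) :
    ∑ a, liftSCF x r a = ∑ θ, r θ := by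
  simp only [liftSCF]
  rw [sum_comm]
  simp only [← mul_sum, hx, mul_one]

theorem one_sub_le_tv_liftSCF (hx : ∀ θ, ∑ a, x θ a = 1)
    (hdisj : ∀ θ θ', θ ≠ θ' → ∀ a, x θ a = 0 ∨ x θ' a = 0) {r : Θ → ℝ} (hr : ∑ θ, r θ = 1)
    (θ : Θ) : 1 - r θ ≤ tv (liftSCF x r) (x θ) := by
  classical
  set S : Finset X := {a | x θ a ≠ 0}
  have hxS : ∑ a ∈ S, x θ a = 1 := by rw [sum_filter_ne_zero, hx θ]
  have hliftS : ∑ a ∈ S, liftSCF x r a = r θ := by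
    rw [sum_congr rfl fun a ha => liftSCF_apply_of_ne_zero hdisj r (mem_filter.1 ha).2,
      ← mul_sum, hxS, mul_one]
  have := sum_sub_le_tv (p := liftSCF x r) (q := x θ) (by rw [sum_liftSCF hx, hr, hx θ]) S
  rwa [sum_sub_distrib, hxS, hliftS] at this

end LiftSCF

section Quota

variable {Θ : Type*} [Fintype Θ] {K : ℕ}

theorem Feasible.sum_apply {q : Θ → ℝ} {r : Fin K → Θ → ℝ} (hr : Feasible K q r) (hK : K ≠ 0)
    (θ : Θ) : ∑ k, r k θ = K * q θ := by
  rw [← hr.2 θ, mul_div_cancel₀ _ (Nat.cast_ne_zero.2 hK)]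

variable [DecidableEq Θ]

theorem natCast_mul_marg (hK : K ≠ 0) (θv : Fin K → Θ) (θ : Θ) :
    K * marg K θv θ = #{k | θv k = θ} := by
  rw [marg, mul_div_cancel₀ _ (Nat.cast_ne_zero.2 hK)]

theorem sum_marg (hK : K ≠ 0) (θv : Fin K → Θ) : ∑ θ, marg K θv θ = 1 := by
  simp only [marg, ← sum_div]
  rw [← Nat.cast_sum, ← card_eq_sum_card_fiberwise fun k _ => mem_univ (θv k), card_univ,
    Fintype.card_fin, div_self (Nat.cast_ne_zero.2 hK)]

theorem Feasible.sum_apply_self_le {q : Θ → ℝ} {r : Fin K → Θ → ℝ} (hr : Feasible K q r)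
    (hK : K ≠ 0) (θv : Fin K → Θ) :
    ∑ k, r k (θv k) ≤ K * ∑ θ, min (q θ) (marg K θv θ) := by
  rw [mul_sum, ← sum_fiberwise univ θv fun k => r k (θv k)]
  refine sum_le_sum fun θ _ => ?_
  rw [mul_min_of_nonneg _ _ (Nat.cast_nonneg K), ← hr.sum_apply hK, natCast_mul_marg hK,
    sum_congr rfl fun k hk => by rw [(mem_filter.1 hk).2]]
  refine le_min (sum_le_sum_of_subset_of_nonneg (subset_univ _) fun k _ _ => (hr.1 k).1 θ) ?_
  simpa using sum_le_sum fun k (_ : k ∈ ({k | θv k = θ} : Finset _)) => (hr.1 k).le_one θ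

end Quota

theorem quota_expost_lower_bound {Θ X : Type*} [Fintype Θ] [Fintype X]
    [DecidableEq Θ]
    (x : Θ → X → ℝ) (hx : ∀ θ, IsProbVec (x θ))
    (hinj : ∀ θ θ' : Θ, θ ≠ θ' → ∀ a, x θ a = 0 ∨ x θ' a = 0)
    (q : Θ → ℝ) (hq : IsProbVec q) (K : ℕ) (hK : 1 ≤ K) (θv : Fin K → Θ)
    (r : Fin K → Θ → ℝ) (hr : Feasible K q r) :
    tv q (marg K θv) ≤ (∑ k, tv (liftSCF x (r k)) (x (θv k))) / K := by
  have hK0 : K ≠ 0 := by omega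
  have herr : ∀ k, 1 - r k (θv k) ≤ tv (liftSCF x (r k)) (x (θv k)) := fun k =>
    one_sub_le_tv_liftSCF (fun θ => (hx θ).2) hinj (hr.1 k).2 (θv k)
  have hsum := sum_le_sum fun k (_ : k ∈ univ) => herr k
  rw [sum_sub_distrib, sum_const, card_univ, Fintype.card_fin, nsmul_one] at hsum
  rw [le_div_iff₀ (by positivity), tv_eq_one_sub_sum_min hq.2 (sum_marg hK0 θv)]
  linarith [hr.sum_apply_self_le hK0 θv]
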